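/- Under the exponential-tilt sampling model: if (Y₁,X₁) and (Y₂,X₂) are i.i.d. pairs whose conditional law of Y given X = x has density y ↦ g(y)·exp(y·xᵀγ*)/Z(x) with respect to a σ-finite measure μ, and if E[|Y₁−Y₂|·‖X₁−X₂‖₁·(1 + ‖γ‖∞ + ‖γ*‖∞)] < ∞ for the relevant γ (so both expectations below are finite), then for every γ ∈ ℝ^p, E[log(1 + exp(−(Y₁−Y₂)·(X₁−X₂)ᵀγ))] ≥ E[log(1 + exp(−(Y₁−Y₂)·(X₁−X₂)ᵀγ*))]; that is, γ* is a global minimizer of the population pairwise pseudo log-likelihood γ ↦ E[log(1 + exp(−(Y₁−Y₂)·(X₁−X₂)ᵀγ))]. -/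

import Mathlib

open MeasureTheory ProbabilityTheory Real BigOperators Finset
open scoped ENNReal Classical

noncomputable section

def dotp {p : ℕ} (v w : Fin p → ℝ) : ℝ := ∑ k, v k * w k

def suppSet {p : ℕ} (v : Fin p → ℝ) : Finset (Fin p) :=
  Finset.univ.filter (fun k => v k ≠ 0)

def l0norm {p : ℕ} (v : Fin p → ℝ) : ℕ := (suppSet v).card

def l1norm {p : ℕ} (v : Fin p → ℝ) : ℝ := ∑ k, |v k|

def l2sq {p : ℕ} (v : Fin p → ℝ) : ℝ := ∑ k, (v k) ^ 2

def linf {p : ℕ} (v : Fin p → ℝ) : ℝ := ⨆ k, |v k|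

/-- `ψ'(t) = eᵗ/(1+eᵗ)`, the logistic function. -/
def psiD (t : ℝ) : ℝ := Real.exp t / (1 + Real.exp t)

/-- `ψ''(t) = eᵗ/(1+eᵗ)²`. -/
def psiD2 (t : ℝ) : ℝ := Real.exp t / (1 + Real.exp t) ^ 2

/-- The pairwise pseudo log-likelihood. -/
def pairLoss {n p : ℕ} (Y : Fin n → ℝ) (X : Fin n → Fin p → ℝ) (γ : Fin p → ℝ) : ℝ :=
  (2 / ((n : ℝ) * ((n : ℝ) - 1))) *
    ∑ i : Fin n, ∑ j : Fin n,
      if i < j then Real.log (1 + Real.exp (-((Y i - Y j) * dotp (fun k => X i k - X j k) γ))) else 0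

/-- Gradient of the pairwise pseudo log-likelihood. -/
def pairGrad {n p : ℕ} (Y : Fin n → ℝ) (X : Fin n → Fin p → ℝ) (γ : Fin p → ℝ) : Fin p → ℝ :=
  fun a => (2 / ((n : ℝ) * ((n : ℝ) - 1))) *
    ∑ i : Fin n, ∑ j : Fin n,
      if i < j then
        (psiD ((Y i - Y j) * dotp (fun k => X i k - X j k) γ) - 1) * (Y i - Y j) * (X i a - X j a)
      else 0

/-- Hessian of the pairwise pseudo log-likelihood. -/
def pairHess {n p : ℕ} (Y : Fin n → ℝ) (X : Fin n → Fin p → ℝ) (γ : Fin p → ℝ) :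
    Matrix (Fin p) (Fin p) ℝ :=
  Matrix.of fun a b => (2 / ((n : ℝ) * ((n : ℝ) - 1))) *
    ∑ i : Fin n, ∑ j : Fin n,
      if i < j then
        psiD2 ((Y i - Y j) * dotp (fun k => X i k - X j k) γ) * (Y i - Y j) ^ 2 *
          (X i a - X j a) * (X i b - X j b)
      else 0

/-- Smallest `s`-sparse eigenvalue. -/
def rhoMinus {p : ℕ} (M : Matrix (Fin p) (Fin p) ℝ) (s : ℕ) : ℝ :=
  sInf {r | ∃ v : Fin p → ℝ, l0norm v ≤ s ∧ l2sq v = 1 ∧ r = dotp v (M.mulVec v)}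

/-- Largest `s`-sparse eigenvalue. -/
def rhoPlus {p : ℕ} (M : Matrix (Fin p) (Fin p) ℝ) (s : ℕ) : ℝ :=
  sSup {r | ∃ v : Fin p → ℝ, l0norm v ≤ s ∧ l2sq v = 1 ∧ r = dotp v (M.mulVec v)}

/-- Matrix `L∞` operator norm: maximal absolute row sum. -/
def matLinf {ι : Type*} [Fintype ι] (A : Matrix ι ι ℝ) : ℝ := ⨆ i, ∑ j, |A i j|

/-- Elementwise supremum norm of a matrix. -/
def matSup {ι κ : Type*} [Fintype ι] [Fintype κ] (A : Matrix ι κ ℝ) : ℝ := ⨆ i, ⨆ j, |A i j|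

/-- `‖(M_SS)⁻¹‖_{L∞}` : L∞ norm of the inverse of the S×S submatrix. -/
def subInvLinf {p : ℕ} (A : Matrix (Fin p) (Fin p) ℝ) (S : Finset (Fin p)) : ℝ :=
  matLinf ((A.submatrix (fun i : {k : Fin p // k ∈ S} => (i : Fin p))
    (fun j : {k : Fin p // k ∈ S} => (j : Fin p)))⁻¹)

/-- ξ is a subgradient of the ℓ1 norm at γ. -/
def L1Subgrad {p : ℕ} (ξ γ : Fin p → ℝ) : Prop :=
  (∀ j, γ j ≠ 0 → ξ j = Real.sign (γ j)) ∧ (∀ j, γ j = 0 → |ξ j| ≤ 1)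

/-- Sub-exponential conditional tail: `P(|Y| ≥ δ | X) ≤ c1 exp(-c2 δ)` a.s., for all δ > 0. -/
def CondTail {Ω : Type*} [MeasurableSpace Ω] (P : Measure Ω) {p : ℕ}
    (Yv : Ω → ℝ) (Xv : Ω → Fin p → ℝ) (c1 c2 : ℝ) : Prop :=
  ∀ δ : ℝ, 0 < δ →
    ∀ᵐ ω ∂P,
      (P[Set.indicator {ω' | δ ≤ |Yv ω'|} (fun _ => (1 : ℝ)) |
          MeasurableSpace.comap Xv inferInstance]) ω ≤ c1 * Real.exp (-c2 * δ)

/-- Normalizing constant of the exponential tilt model. -/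
def tiltZ {p : ℕ} (μ : Measure ℝ) (g : ℝ → ℝ) (γ : Fin p → ℝ) (x : Fin p → ℝ) : ℝ :=
  ∫ y, g y * Real.exp (y * dotp x γ) ∂μ

/-- Exponential-tilt sampling model: the conditional law of `Y` given `X = x` has density
`y ↦ g(y) exp(y xᵀγ*)/Z(x)` with respect to `μ`. -/
def IsTiltModel {Ω : Type*} [MeasurableSpace Ω] {p : ℕ} (P : Measure Ω)
    (Yv : Ω → ℝ) (Xv : Ω → Fin p → ℝ) (μ : Measure ℝ) (g : ℝ → ℝ) (γs : Fin p → ℝ) : Prop :=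
  Measurable Yv ∧ Measurable Xv ∧ Measurable g ∧ (∀ y, 0 ≤ g y) ∧
  (∀ x : Fin p → ℝ, Integrable (fun y => g y * Real.exp (y * dotp x γs)) μ ∧
    0 < tiltZ μ g γs x) ∧
  Measure.map (fun ω => (Yv ω, Xv ω)) P =
    (Measure.map Xv P).bind (fun x =>
      Measure.map (fun y => (y, x))
        (μ.withDensity fun y => ENNReal.ofReal (g y * Real.exp (y * dotp x γs) / tiltZ μ g γs x)))

/-- Regularity conditions (a)–(d) for the penalty family `pλ(t) = pen λ t`, with
`q_λ(t) = pλ(|t|) − λ|t|` having derivative `qd λ`. -/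
def PenaltyFamily (pen : ℝ → ℝ → ℝ) (qd : ℝ → ℝ → ℝ) (ζm ζp : ℝ) : Prop :=
  (∀ lam t, 0 ≤ t → 0 ≤ pen lam t) ∧
  (∀ lam, pen lam 0 = 0) ∧
  (∀ lam t, HasDerivAt (fun u : ℝ => pen lam |u| - lam * |u|) (qd lam t) t) ∧
  0 ≤ ζp ∧ 0 ≤ ζm ∧
  (∀ lam t t' : ℝ, t < t' →
    -ζm ≤ (qd lam t' - qd lam t) / (t' - t) ∧ (qd lam t' - qd lam t) / (t' - t) ≤ -ζp) ∧
  (∀ lam t, |qd lam t| ≤ lam) ∧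
  (∀ lam, qd lam 0 = 0) ∧
  (∀ lam1 lam2 t, |qd lam1 t - qd lam2 t| ≤ |lam1 - lam2|)

/-- Regularity conditions (e)–(f) for the penalty at a given `λ`:
`p'_λ(t) = q'_λ(t) + λ ≥ c7 λ` on `(0, c8 λ]` and `p'_λ(t) = 0` for `t > ν`. -/
def PenaltyAt (qd : ℝ → ℝ → ℝ) (lam c7 c8 ν : ℝ) : Prop :=
  0 ≤ c7 ∧ c7 ≤ 1 ∧ 0 < c8 ∧
  (∀ t : ℝ, 0 < t → t ≤ c8 * lam → c7 * lam ≤ qd lam t + lam) ∧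
  (∀ t : ℝ, ν < t → qd lam t + lam = 0)

/-! Write `ℓ(t) = log (1 + exp t)`. Given `X₁ = x₁` and `X₂ = x₂`, the joint density of
`(Y₁, Y₂)` at `(y₁, y₂)` is `exp ((y₁ - y₂) (x₁ - x₂)ᵀγ*)` times its value at `(y₂, y₁)`.
Averaging the expected loss with its image under this exchange of responses reduces the claim
to the pointwise inequality `a ℓ(-u) + b ℓ(u) ≤ a ℓ(-t) + b ℓ(t)`, where `u` and `t` are
`(y₁ - y₂) (x₁ - x₂)ᵀ` applied to `γ*` and `γ`, and `a = b eᵘ ≥ 0` are the two densities. Since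
`ℓ(-t) = ℓ(t) - t`, this says that `t ↦ (1 + eᵘ) ℓ(t) - eᵘ t` is minimal at `t = u`, which is the
tangent-line inequality for the convex function `ℓ`, whose derivative at `u` is
`eᵘ / (1 + eᵘ)`. -/

namespace Real

theorem log_one_add_exp_neg (t : ℝ) : log (1 + exp (-t)) = log (1 + exp t) - t := by
  rw [eq_sub_iff_add_eq, ← log_exp t, ← log_mul (by positivity) (exp_pos t).ne', log_exp,
    add_mul, one_mul, ← exp_add, neg_add_cancel, exp_zero, add_comm]

theorem log_one_add_exp_nonneg (t : ℝ) : 0 ≤ log (1 + exp t) :=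
  log_nonneg (by linarith [exp_pos t])

theorem log_one_add_exp_le (t : ℝ) : log (1 + exp t) ≤ log 2 + |t| := by
  have h1 : 1 + exp t ≤ 2 * exp |t| := by
    linarith [exp_le_exp.2 (le_abs_self t), one_le_exp (abs_nonneg t)]
  calc log (1 + exp t) ≤ log (2 * exp |t|) := log_le_log (by positivity) h1
    _ = log 2 + |t| := by rw [log_mul two_ne_zero (exp_pos _).ne', log_exp]

theorem mul_sub_le_log_one_add_exp_sub (u t : ℝ) :
    exp u * (t - u) ≤ (1 + exp u) * (log (1 + exp t) - log (1 + exp u)) := by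
  have hpos : 0 < 1 + exp u := by positivity
  set c := exp u / (1 + exp u)
  have hc : c < 1 := (div_lt_one hpos).2 (by linarith)
  -- Jensen for `exp` at the points `t - u` and `0` with weights `c` and `1 - c`.
  have hjensen := convexOn_exp.2 (Set.mem_univ (t - u)) (Set.mem_univ 0) (by positivity)
    (sub_nonneg.2 hc.le) (add_sub_cancel c 1)
  have hmix : c • exp (t - u) + (1 - c) • exp 0 = (1 + exp t) / (1 + exp u) := by
    simp only [smul_eq_mul, exp_zero, exp_sub, c]
    field_simp
    ring
  rw [smul_eq_mul, smul_zero, add_zero, hmix] at hjensen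
  have hlog : c * (t - u) ≤ log (1 + exp t) - log (1 + exp u) := by
    rw [← log_div (by positivity) hpos.ne', ← log_exp (c * (t - u))]
    exact log_le_log (exp_pos _) hjensen
  calc exp u * (t - u) = (1 + exp u) * (c * (t - u)) := by simp only [c]; field_simp
    _ ≤ _ := mul_le_mul_of_nonneg_left hlog hpos.le

theorem mul_log_one_add_exp_neg_add_le {a b u : ℝ} (hb : 0 ≤ b) (hab : a = b * exp u) (t : ℝ) :
    a * log (1 + exp (-u)) + b * log (1 + exp u) ≤ a * log (1 + exp (-t)) + b * log (1 + exp t) := by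
  rw [log_one_add_exp_neg, log_one_add_exp_neg, hab]
  nlinarith [mul_nonneg hb (sub_nonneg.2 (mul_sub_le_log_one_add_exp_sub u t))]

end Real

namespace MeasureTheory

variable {α β γ δ : Type*} [MeasurableSpace α] [MeasurableSpace β] [MeasurableSpace γ]
  [MeasurableSpace δ]

theorem measurePreserving_prodProdProdComm (μa : Measure α) (μb : Measure β) (μc : Measure γ)
    (μd : Measure δ) [SigmaFinite μa] [SigmaFinite μb] [SigmaFinite μc] [SigmaFinite μd] :
    MeasurePreserving (fun z : (α × β) × (γ × δ) => ((z.1.1, z.2.1), (z.1.2, z.2.2)))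
      ((μa.prod μb).prod (μc.prod μd)) ((μa.prod μc).prod (μb.prod μd)) := by
  have hm : Measurable fun z : (α × β) × (γ × δ) => ((z.1.1, z.2.1), (z.1.2, z.2.2)) := by
    fun_prop
  refine ⟨hm, (Measure.prod_eq_generateFrom generateFrom_prod generateFrom_prod isPiSystem_prod
    isPiSystem_prod (μa.toFiniteSpanningSetsIn.prod μc.toFiniteSpanningSetsIn)
    (μb.toFiniteSpanningSetsIn.prod μd.toFiniteSpanningSetsIn) ?_).symm⟩
  rintro - ⟨s, hs, t, ht, rfl⟩ - ⟨u, hu, v, hv, rfl⟩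
  have hpre : (fun z : (α × β) × (γ × δ) => ((z.1.1, z.2.1), (z.1.2, z.2.2))) ⁻¹'
      ((s ×ˢ t) ×ˢ (u ×ˢ v)) = (s ×ˢ u) ×ˢ (t ×ˢ v) := by
    ext; simp [and_and_and_comm]
  rw [Measure.map_apply hm ((hs.prod ht).prod (hu.prod hv)), hpre]
  simp only [Measure.prod_prod]
  ring

theorem lintegral_mul_le_lintegral_mul_of_symmetrized {ρ : Measure α} {σ : α → α}
    (hσ : MeasurePreserving σ ρ ρ) {D G₁ G₂ : α → ℝ≥0∞} (hD : Measurable D)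
    (hG₁ : Measurable G₁) (hG₂ : Measurable G₂)
    (h : ∀ z, D z * G₁ z + D (σ z) * G₁ (σ z) ≤ D z * G₂ z + D (σ z) * G₂ (σ z)) :
    ∫⁻ z, D z * G₁ z ∂ρ ≤ ∫⁻ z, D z * G₂ z ∂ρ := by
  have hsymm : ∀ G : α → ℝ≥0∞, Measurable G →
      2 * ∫⁻ z, D z * G z ∂ρ = ∫⁻ z, (D z * G z + D (σ z) * G (σ z)) ∂ρ := fun G hG => by
    have hDG : Measurable fun z => D z * G z := hD.mul hG
    rw [lintegral_add_left hDG, hσ.lintegral_comp hDG, two_mul]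
  refine (ENNReal.mul_le_mul_iff_right two_ne_zero ENNReal.ofNat_ne_top).1 ?_
  rw [hsymm G₁ hG₁, hsymm G₂ hG₂]
  exact lintegral_mono h

theorem bind_map_prodMk_withDensity (κ : Measure α) [SFinite κ] (μ : Measure β) [SFinite μ]
    {f : α → β → ℝ≥0∞} (hf : Measurable (Function.uncurry f)) :
    κ.bind (fun x => (μ.withDensity (f x)).map (fun y => (y, x)))
      = (μ.prod κ).withDensity (fun z => f z.2 z.1) := by
  have hF : Measurable fun z : β × α => f z.2 z.1 := hf.comp measurable_swap
  have happly : ∀ x s, MeasurableSet s → (μ.withDensity (f x)).map (fun y => (y, x)) s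
      = ∫⁻ y, s.indicator (fun z => f z.2 z.1) (y, x) ∂μ := fun x s hs => by
    rw [Measure.map_apply measurable_prodMk_right hs,
      withDensity_apply _ (measurable_prodMk_right hs),
      ← lintegral_indicator (measurable_prodMk_right hs)]
    rfl
  have hmeas : Measurable fun x => (μ.withDensity (f x)).map (fun y => (y, x)) :=
    Measure.measurable_of_measurable_coe _ fun s hs => by
      simp_rw [happly _ s hs]
      exact ((hF.indicator hs).comp measurable_swap).lintegral_prod_right'
  ext s hs
  rw [Measure.bind_apply hs hmeas.aemeasurable, withDensity_apply _ hs, ← lintegral_indicator hs,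
    lintegral_prod_symm' _ (hF.indicator hs)]
  exact lintegral_congr fun x => happly x s hs

theorem measurePreserving_exchange_fst (μ : Measure β) (κ : Measure α) [SigmaFinite μ] [SigmaFinite κ] :
    MeasurePreserving (fun z : (β × α) × (β × α) => ((z.2.1, z.1.2), (z.1.1, z.2.2)))
      ((μ.prod κ).prod (μ.prod κ)) ((μ.prod κ).prod (μ.prod κ)) :=
  (measurePreserving_prodProdProdComm μ μ κ κ).comp
    (((Measure.measurePreserving_swap).prod (MeasurePreserving.id _)).comp
      (measurePreserving_prodProdProdComm μ κ μ κ))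

theorem integrable_log_one_add_exp {Ω : Type*} [MeasurableSpace Ω] {P : Measure Ω}
    [IsFiniteMeasure P] {f B : Ω → ℝ} (hf : AEStronglyMeasurable f P) (hB : Integrable B P)
    (hfB : ∀ ω, |f ω| ≤ B ω) : Integrable (fun ω => log (1 + exp (f ω))) P := by
  have hcont : Continuous fun t : ℝ => log (1 + exp t) :=
    (continuous_const.add continuous_exp).log fun t => (add_pos one_pos (exp_pos t)).ne'
  refine ((integrable_const (log 2)).add hB).mono' (hcont.comp_aestronglyMeasurable hf)
    (ae_of_all _ fun ω => ?_)
  rw [norm_eq_abs, abs_of_nonneg (log_one_add_exp_nonneg _), Pi.add_apply]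
  linarith [log_one_add_exp_le (f ω), hfB ω]

theorem integral_le_integral_of_lintegral_ofReal_le {Ω : Type*} [MeasurableSpace Ω]
    {P : Measure Ω} {f g : Ω → ℝ} (hf0 : 0 ≤ᵐ[P] f) (hf : AEStronglyMeasurable f P)
    (hg0 : 0 ≤ᵐ[P] g) (hg : Integrable g P)
    (h : ∫⁻ ω, ENNReal.ofReal (f ω) ∂P ≤ ∫⁻ ω, ENNReal.ofReal (g ω) ∂P) :
    ∫ ω, f ω ∂P ≤ ∫ ω, g ω ∂P := by
  rw [integral_eq_lintegral_of_nonneg_ae hf0 hf, integral_eq_lintegral_of_nonneg_ae hg0 hg.1]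
  exact ENNReal.toReal_mono ((lintegral_ofReal_ne_top_iff_integrable hg.1 hg0).2 hg) h

end MeasureTheory

section TiltModel

variable {p : ℕ}

theorem dotp_sub_left (v v' w : Fin p → ℝ) :
    dotp (fun k => v k - v' k) w = dotp v w - dotp v' w := by
  simp only [dotp, sub_mul, Finset.sum_sub_distrib]

theorem continuous_dotp_left (w : Fin p → ℝ) : Continuous fun v : Fin p → ℝ => dotp v w := by
  unfold dotp; fun_prop

theorem linf_nonneg (v : Fin p → ℝ) : 0 ≤ linf v :=
  Real.iSup_nonneg fun _ => abs_nonneg _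

theorem abs_le_linf (v : Fin p → ℝ) (k : Fin p) : |v k| ≤ linf v :=
  le_ciSup (f := fun k => |v k|) (Set.finite_range _).bddAbove k

theorem abs_mul_dotp_le {a : ℝ} (v : Fin p → ℝ) {w : Fin p → ℝ} {C : ℝ} (hC : linf w ≤ C) :
    |a * dotp v w| ≤ |a| * l1norm v * C := by
  have hdotp : |dotp v w| ≤ l1norm v * C :=
    calc |dotp v w| ≤ ∑ k, |v k| * |w k| := by
          simpa only [dotp, abs_mul] using Finset.abs_sum_le_sum_abs (fun k => v k * w k) univ
      _ ≤ ∑ k, |v k| * C := Finset.sum_le_sum fun k _ =>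
          mul_le_mul_of_nonneg_left ((abs_le_linf w k).trans hC) (abs_nonneg _)
      _ = l1norm v * C := by rw [l1norm, Finset.sum_mul]
  rw [abs_mul, mul_assoc]
  exact mul_le_mul_of_nonneg_left hdotp (abs_nonneg a)

def tiltDensity (μ : Measure ℝ) (g : ℝ → ℝ) (γs x : Fin p → ℝ) (y : ℝ) : ℝ :=
  g y * exp (y * dotp x γs) / tiltZ μ g γs x

/-- The joint law of `(Y, X)` in the tilt model when `X` has law `κ`. -/
def tiltLaw (μ : Measure ℝ) (κ : Measure (Fin p → ℝ)) (g : ℝ → ℝ) (γs : Fin p → ℝ) :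
    Measure (ℝ × (Fin p → ℝ)) :=
  (μ.prod κ).withDensity fun z => ENNReal.ofReal (tiltDensity μ g γs z.2 z.1)

def pairwiseLoss (γ : Fin p → ℝ) (z : (ℝ × (Fin p → ℝ)) × (ℝ × (Fin p → ℝ))) : ℝ :=
  log (1 + exp (-((z.1.1 - z.2.1) * dotp (fun k => z.1.2 k - z.2.2 k) γ)))

theorem pairwiseLoss_nonneg (γ : Fin p → ℝ) (z : (ℝ × (Fin p → ℝ)) × (ℝ × (Fin p → ℝ))) :
    0 ≤ pairwiseLoss γ z :=
  log_one_add_exp_nonneg _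

theorem continuous_pairwiseLoss (γ : Fin p → ℝ) : Continuous (pairwiseLoss γ) := by
  have hd : Continuous fun z : (ℝ × (Fin p → ℝ)) × (ℝ × (Fin p → ℝ)) =>
      dotp (fun k => z.1.2 k - z.2.2 k) γ := by
    unfold dotp; fun_prop
  exact (continuous_const.add ((continuous_fst.fst.sub continuous_snd.fst).mul hd).neg.rexp).log
    fun z => (add_pos one_pos (exp_pos _)).ne'

theorem measurable_tiltZ (μ : Measure ℝ) [SFinite μ] {g : ℝ → ℝ} (hg : Measurable g)
    (γs : Fin p → ℝ) : Measurable (tiltZ μ g γs) := by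
  have hF : Measurable fun q : (Fin p → ℝ) × ℝ => g q.2 * exp (q.2 * dotp q.1 γs) :=
    (hg.comp measurable_snd).mul
      (measurable_snd.mul ((continuous_dotp_left γs).measurable.comp measurable_fst)).exp
  exact hF.stronglyMeasurable.integral_prod_right'.measurable

theorem measurable_tiltDensity (μ : Measure ℝ) [SFinite μ] {g : ℝ → ℝ} (hg : Measurable g)
    (γs : Fin p → ℝ) : Measurable (Function.uncurry (tiltDensity μ g γs)) :=
  ((hg.comp measurable_snd).mul
    (measurable_snd.mul ((continuous_dotp_left γs).measurable.comp measurable_fst)).exp).div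
    ((measurable_tiltZ μ hg γs).comp measurable_fst)

theorem tiltDensity_nonneg (μ : Measure ℝ) {g : ℝ → ℝ} (hg : ∀ y, 0 ≤ g y) (γs x : Fin p → ℝ)
    (y : ℝ) : 0 ≤ tiltDensity μ g γs x y :=
  div_nonneg (mul_nonneg (hg y) (exp_pos _).le)
    (integral_nonneg fun y => mul_nonneg (hg y) (exp_pos _).le)

theorem tiltDensity_mul_tiltDensity (μ : Measure ℝ) (g : ℝ → ℝ) (γs x₁ x₂ : Fin p → ℝ)
    (y₁ y₂ : ℝ) :
    tiltDensity μ g γs x₁ y₁ * tiltDensity μ g γs x₂ y₂ = tiltDensity μ g γs x₁ y₂ *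
      tiltDensity μ g γs x₂ y₁ * exp ((y₁ - y₂) * dotp (fun k => x₁ k - x₂ k) γs) := by
  have hexp : exp (y₁ * dotp x₁ γs) * exp (y₂ * dotp x₂ γs) = exp (y₂ * dotp x₁ γs) *
      exp (y₁ * dotp x₂ γs) * exp ((y₁ - y₂) * dotp (fun k => x₁ k - x₂ k) γs) := by
    simp only [← exp_add, dotp_sub_left]
    ring_nf
  simp only [tiltDensity, div_eq_mul_inv]
  linear_combination (g y₁ * g y₂ * (tiltZ μ g γs x₁)⁻¹ * (tiltZ μ g γs x₂)⁻¹) * hexp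

theorem pairwiseLoss_tilt_symmetrized_le (μ : Measure ℝ) {g : ℝ → ℝ} (hg : ∀ y, 0 ≤ g y)
    (γs γ x₁ x₂ : Fin p → ℝ) (y₁ y₂ : ℝ) :
    tiltDensity μ g γs x₁ y₁ * tiltDensity μ g γs x₂ y₂ * pairwiseLoss γs ((y₁, x₁), (y₂, x₂))
        + tiltDensity μ g γs x₁ y₂ * tiltDensity μ g γs x₂ y₁
          * pairwiseLoss γs ((y₂, x₁), (y₁, x₂))
      ≤ tiltDensity μ g γs x₁ y₁ * tiltDensity μ g γs x₂ y₂ * pairwiseLoss γ ((y₁, x₁), (y₂, x₂))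
        + tiltDensity μ g γs x₁ y₂ * tiltDensity μ g γs x₂ y₁
          * pairwiseLoss γ ((y₂, x₁), (y₁, x₂)) := by
  have hswap : ∀ γ' : Fin p → ℝ, pairwiseLoss γ' ((y₂, x₁), (y₁, x₂))
      = log (1 + exp ((y₁ - y₂) * dotp (fun k => x₁ k - x₂ k) γ')) := fun γ' => by
    rw [pairwiseLoss, ← neg_mul, neg_sub]
  rw [hswap, hswap]
  exact Real.mul_log_one_add_exp_neg_add_le
    (mul_nonneg (tiltDensity_nonneg μ hg _ _ _) (tiltDensity_nonneg μ hg _ _ _))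
    (tiltDensity_mul_tiltDensity μ g γs x₁ x₂ y₁ y₂) _

theorem lintegral_pairwiseLoss_tiltLaw_le (μ : Measure ℝ) [SigmaFinite μ]
    (κ : Measure (Fin p → ℝ)) [SigmaFinite κ] {g : ℝ → ℝ} (hg : Measurable g)
    (hg0 : ∀ y, 0 ≤ g y) (γs γ : Fin p → ℝ) :
    ∫⁻ z, ENNReal.ofReal (pairwiseLoss γs z) ∂(tiltLaw μ κ g γs).prod (tiltLaw μ κ g γs)
      ≤ ∫⁻ z, ENNReal.ofReal (pairwiseLoss γ z) ∂(tiltLaw μ κ g γs).prod (tiltLaw μ κ g γs) := by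
  set w := fun z : ℝ × (Fin p → ℝ) => ENNReal.ofReal (tiltDensity μ g γs z.2 z.1)
  have hw : Measurable w :=
    ENNReal.measurable_ofReal.comp ((measurable_tiltDensity μ hg γs).comp measurable_swap)
  have hL : ∀ γ' : Fin p → ℝ, Measurable fun z => ENNReal.ofReal (pairwiseLoss γ' z) :=
    fun γ' => (continuous_pairwiseLoss γ').measurable.ennreal_ofReal
  have hD : Measurable fun z : (ℝ × (Fin p → ℝ)) × (ℝ × (Fin p → ℝ)) => w z.1 * w z.2 :=
    (hw.comp measurable_fst).mul (hw.comp measurable_snd)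
  rw [tiltLaw, prod_withDensity hw hw, lintegral_withDensity_eq_lintegral_mul _ hD (hL γs),
    lintegral_withDensity_eq_lintegral_mul _ hD (hL γ)]
  refine lintegral_mul_le_lintegral_mul_of_symmetrized (measurePreserving_exchange_fst μ κ)
    hD (hL γs) (hL γ) ?_
  rintro ⟨⟨y₁, x₁⟩, ⟨y₂, x₂⟩⟩
  have h0 : ∀ x y, 0 ≤ tiltDensity μ g γs x y := tiltDensity_nonneg μ hg0 γs
  simp only [w, ← ENNReal.ofReal_mul (h0 _ _), ← ENNReal.ofReal_mul (mul_nonneg (h0 _ _) (h0 _ _))]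
  rw [← ENNReal.ofReal_add, ← ENNReal.ofReal_add]
  · exact ENNReal.ofReal_le_ofReal (pairwiseLoss_tilt_symmetrized_le μ hg0 γs γ x₁ x₂ y₁ y₂)
  all_goals exact mul_nonneg (mul_nonneg (h0 _ _) (h0 _ _)) (pairwiseLoss_nonneg _ _)

theorem IsTiltModel.map_eq_tiltLaw {Ω : Type*} [MeasurableSpace Ω] {P : Measure Ω}
    [IsFiniteMeasure P] {Y : Ω → ℝ} {X : Ω → Fin p → ℝ} {μ : Measure ℝ} [SFinite μ]
    {g : ℝ → ℝ} {γs : Fin p → ℝ} (hm : IsTiltModel P Y X μ g γs) :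
    P.map (fun ω => (Y ω, X ω)) = tiltLaw μ (P.map X) g γs :=
  hm.2.2.2.2.2.trans (bind_map_prodMk_withDensity _ _
    (f := fun x y => ENNReal.ofReal (tiltDensity μ g γs x y))
    (ENNReal.measurable_ofReal.comp (measurable_tiltDensity μ hm.2.2.1 γs)))

end TiltModel

/-- under the exponential-tilt sampling model, for i.i.d. pairs
`(Y₁,X₁), (Y₂,X₂)` and any `γ ∈ ℝ^p` such that
`E[|Y₁−Y₂|·‖X₁−X₂‖₁·(1 + ‖γ‖∞ + ‖γ*‖∞)] < ∞`, the true parameter `γ*` is a global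
minimizer of the population pairwise pseudo log-likelihood:
`E[log(1+exp(−(Y₁−Y₂)(X₁−X₂)ᵀγ*))] ≤ E[log(1+exp(−(Y₁−Y₂)(X₁−X₂)ᵀγ))]`. -/
theorem stmt_9 {Ω : Type*} [MeasurableSpace Ω] (P : Measure Ω) [IsProbabilityMeasure P]
    {p : ℕ} (Y₁ Y₂ : Ω → ℝ) (X₁ X₂ : Ω → Fin p → ℝ)
    (μ : Measure ℝ) [SigmaFinite μ] (g : ℝ → ℝ) (γs : Fin p → ℝ)
    (hm1 : IsTiltModel P Y₁ X₁ μ g γs) (hm2 : IsTiltModel P Y₂ X₂ μ g γs)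
    (hident : Measure.map (fun ω => (Y₁ ω, X₁ ω)) P = Measure.map (fun ω => (Y₂ ω, X₂ ω)) P)
    (hind : IndepFun (fun ω => (Y₁ ω, X₁ ω)) (fun ω => (Y₂ ω, X₂ ω)) P)
    (γ : Fin p → ℝ)
    (hint : Integrable (fun ω => |Y₁ ω - Y₂ ω| * l1norm (fun k => X₁ ω k - X₂ ω k) *
      (1 + linf γ + linf γs)) P) :
    ∫ ω, Real.log (1 + Real.exp (-((Y₁ ω - Y₂ ω) * dotp (fun k => X₁ ω k - X₂ ω k) γs))) ∂P
      ≤ ∫ ω, Real.log (1 + Real.exp (-((Y₁ ω - Y₂ ω) * dotp (fun k => X₁ ω k - X₂ ω k) γ))) ∂P := by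
  have hlaw₁ := hm1.map_eq_tiltLaw
  obtain ⟨hY₁, hX₁, hg, hg0, -⟩ := hm1
  obtain ⟨hY₂, hX₂, -⟩ := hm2
  set Z : Ω → (ℝ × (Fin p → ℝ)) × (ℝ × (Fin p → ℝ)) := fun ω => ((Y₁ ω, X₁ ω), (Y₂ ω, X₂ ω))
  have hZ : Measurable Z := (hY₁.prodMk hX₁).prodMk (hY₂.prodMk hX₂)
  have hlawZ : P.map Z = (tiltLaw μ (P.map X₁) g γs).prod (tiltLaw μ (P.map X₁) g γs) := by
    rw [(indepFun_iff_map_prod_eq_prod_map_map (hY₁.prodMk hX₁).aemeasurable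
      (hY₂.prodMk hX₂).aemeasurable).1 hind, ← hident, hlaw₁]
  have hintγ : Integrable (fun ω => pairwiseLoss γ (Z ω)) P :=
    integrable_log_one_add_exp ((hY₁.sub hY₂).mul
      ((continuous_dotp_left γ).measurable.comp (hX₁.sub hX₂))).neg.aestronglyMeasurable
      hint fun ω => (abs_neg _).trans_le (abs_mul_dotp_le _ (by linarith [linf_nonneg γs]))
  have : IsProbabilityMeasure (P.map X₁) := Measure.isProbabilityMeasure_map hX₁.aemeasurable
  change ∫ ω, pairwiseLoss γs (Z ω) ∂P ≤ ∫ ω, pairwiseLoss γ (Z ω) ∂P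
  refine integral_le_integral_of_lintegral_ofReal_le (ae_of_all _ fun ω => pairwiseLoss_nonneg _ _)
    ((continuous_pairwiseLoss γs).measurable.comp hZ).aestronglyMeasurable
    (ae_of_all _ fun ω => pairwiseLoss_nonneg _ _) hintγ ?_
  rw [← lintegral_map (continuous_pairwiseLoss γs).measurable.ennreal_ofReal hZ,
    ← lintegral_map (continuous_pairwiseLoss γ).measurable.ennreal_ofReal hZ, hlawZ]
  exact lintegral_pairwiseLoss_tiltLaw_le μ _ hg hg0 γs γ
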